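/- Let τ be a finite Wang tileset viewed as a directed multigraph G on colors (vertices are the east/west colors, each tile gives an edge from its west color to its east color). Suppose t ∈ τ is a tile such that there is no directed path in G from the east color of t to the west color of t. Then τ tiles the plane if and only if τ \ {t} tiles the plane. -/

import Mathlib

/-!
In a tiling of the plane, the west colours along a row are joined by a directed path in the graph
of the tileset, so a tile `t` with no path from `t.e` to `t.w` occurs at most once in each row.
Hence, for every `n`, all but finitely many horizontal translates of a tiling avoid `t` on the
square `[-n, n]²`. An ultrafilter limit of such translates is a tiling without `t`.
-/

structure WangTile (C : Type) where
  e : C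
  w : C
  n : C
  s : C
deriving DecidableEq

def IsTiling {C : Type} (τ : Set (WangTile C)) (f : ℤ → ℤ → WangTile C) : Prop :=
  (∀ i j, f i j ∈ τ) ∧ (∀ i j, (f i j).e = (f (i+1) j).w) ∧
    (∀ i j, (f i j).n = (f i (j+1)).s)

/-- One step in the graph of a tileset: an edge from the west color to the east color. -/
def Step {C : Type} (τ : Set (WangTile C)) (u v : C) : Prop :=
  ∃ t ∈ τ, t.w = u ∧ t.e = v

namespace IsTiling

variable {C : Type} {τ : Set (WangTile C)} {f : ℤ → ℤ → WangTile C}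

theorem shift (hf : IsTiling τ f) (a : ℤ) : IsTiling τ (fun i j => f (i + a) j) :=
  ⟨fun i j => hf.1 _ _, fun i j => by simpa only [add_right_comm] using hf.2.1 (i + a) j,
    fun i j => hf.2.2 _ _⟩

theorem reflTransGen_step_w (hf : IsTiling τ f) (j : ℤ) {i i' : ℤ} (h : i ≤ i') :
    Relation.ReflTransGen (Step τ) (f i j).w (f i' j).w := by
  induction i', h using Int.leInduction with
  | base => rfl
  | succ k _ ih => exact ih.tail ⟨f k j, hf.1 k j, rfl, hf.2.1 k j⟩

theorem eq_of_apply_eq (hf : IsTiling τ f) {t : WangTile C}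
    (hno : ¬ Relation.ReflTransGen (Step τ) t.e t.w) {i i' j : ℤ}
    (hi : f i j = t) (hi' : f i' j = t) : i = i' := by
  have no_later : ∀ {k k' : ℤ}, f k j = t → f k' j = t → ¬ k < k' := by
    intro k k' hk hk' hlt
    have hpath := hf.reflTransGen_step_w j (Int.add_one_le_of_lt hlt)
    rw [← hf.2.1 k j, hk, hk'] at hpath
    exact hno hpath
  rcases lt_trichotomy i i' with h | h | h
  · exact absurd h (no_later hi hi')
  · exact h
  · exact absurd h (no_later hi' hi)

theorem finite_setOf_shift_hits (hf : IsTiling τ f) {t : WangTile C}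
    (hno : ¬ Relation.ReflTransGen (Step τ) t.e t.w) (I J : Finset ℤ) :
    {a : ℤ | ∃ i ∈ I, ∃ j ∈ J, f (i + a) j = t}.Finite := by
  refine Set.Finite.subset (I.finite_toSet.biUnion fun i _ => J.finite_toSet.biUnion fun j _ =>
    Set.Subsingleton.finite (s := {a : ℤ | f (i + a) j = t}) ?_) ?_
  · intro a ha b hb
    have := hf.eq_of_apply_eq hno ha hb
    omega
  · rintro a ⟨i, hi, j, hj, hij⟩
    simp only [Set.mem_iUnion]
    exact ⟨i, hi, j, hj, hij⟩

end IsTiling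

theorem exists_isTiling_of_eventually_mem {C : Type} {τ σ : Set (WangTile C)} (hτ : τ.Finite)
    (g : ℕ → ℤ → ℤ → WangTile C) (hg : ∀ n, IsTiling τ (g n))
    (hσ : ∀ i j, ∀ᶠ n in Filter.atTop, g n i j ∈ σ) : ∃ f, IsTiling σ f := by
  let U : Ultrafilter ℕ := Ultrafilter.of Filter.atTop
  have hlim : ∀ i j, ∃ v, ∀ᶠ n in U, g n i j = v := by
    intro i j
    obtain ⟨v, -, hv⟩ := (U.eventually_exists_mem_iff hτ (P := fun v n => g n i j = v)).1
      (Filter.Eventually.of_forall fun n => ⟨g n i j, (hg n).1 i j, rfl⟩)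
    exact ⟨v, hv⟩
  choose f hf using hlim
  refine ⟨f, fun i j => ?_, fun i j => ?_, fun i j => ?_⟩
  · obtain ⟨n, hn, hmem⟩ := ((hf i j).and (Ultrafilter.of_le _ (hσ i j))).exists
    exact hn ▸ hmem
  · obtain ⟨n, h, h'⟩ := ((hf i j).and (hf (i + 1) j)).exists
    exact h ▸ h' ▸ (hg n).2.1 i j
  · obtain ⟨n, h, h'⟩ := ((hf i j).and (hf i (j + 1))).exists
    exact h ▸ h' ▸ (hg n).2.2 i j

theorem stmt1_general {C : Type} [DecidableEq C] (τ : Finset (WangTile C))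
    (t : WangTile C)
    (hnopath : ¬ Relation.ReflTransGen (Step (↑τ : Set (WangTile C))) t.e t.w) :
    (∃ f, IsTiling (↑τ : Set (WangTile C)) f) ↔
      (∃ f, IsTiling (↑(τ.erase t) : Set (WangTile C)) f) := by
  constructor
  · rintro ⟨f, hf⟩
    have hshift : ∀ n : ℕ, ∃ a : ℤ,
        a ∉ {a : ℤ | ∃ i ∈ Finset.Icc (-n : ℤ) n, ∃ j ∈ Finset.Icc (-n : ℤ) n, f (i + a) j = t} :=
      fun n => (hf.finite_setOf_shift_hits hnopath _ _).infinite_compl.nonempty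
    choose a ha using hshift
    refine exists_isTiling_of_eventually_mem τ.finite_toSet (fun n i j => f (i + a n) j)
      (fun n => hf.shift (a n)) fun i j => ?_
    filter_upwards [Filter.eventually_ge_atTop (max i.natAbs j.natAbs)] with n hn
    rw [Finset.coe_erase]
    refine ⟨hf.1 _ _, fun hfa => ha n ⟨i, ?_, j, ?_, hfa⟩⟩ <;> simp only [Finset.mem_Icc] <;> omega
  · rintro ⟨f, hf⟩
    exact ⟨f, fun i j => Finset.mem_of_mem_erase (hf.1 i j), hf.2.1, hf.2.2⟩

theorem stmt1 {C : Type} [Fintype C] [DecidableEq C] (τ : Finset (WangTile C))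
    (t : WangTile C) (ht : t ∈ τ)
    (hnopath : ¬ Relation.ReflTransGen (Step (↑τ : Set (WangTile C))) t.e t.w) :
    (∃ f, IsTiling (↑τ : Set (WangTile C)) f) ↔
      (∃ f, IsTiling (↑(τ.erase t) : Set (WangTile C)) f) :=
  stmt1_general τ t hnopath
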